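/- arXiv:2009.06411 — 3 statements merged into one kernel-verified Lean document; each statement's English description precedes it below -/
import Mathlib

section
/- For every positive integer n, the number of divisors function satisfies d(n) = Σ_{k=1}^{n} (1/k) · H_{⌊n/k⌋} · μ(k / gcd(n,k)) · (φ(k) / φ(k / gcd(n,k))), where H_m = Σ_{i=1}^{m} 1/i is the m-th harmonic number. -/
/-!
The summand `μ(k/g) φ(k) / φ(k/g)`, `g = gcd(n, k)`, is von Sterneck's closed form of the
Ramanujan sum `c_k(n) = ∑_{d ∣ gcd(n, k)} d μ(k/d)`: both sides are multiplicative in `k` and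
agree on prime powers. As a function of `k`, `c_k(n)` is the Dirichlet convolution of
`d ↦ d [d ∣ n]` with `μ`, so `∑_{k ∣ t} c_k(n) = t [t ∣ n]`. Expanding
`H_{⌊n/k⌋} = ∑_{j ≤ n/k} 1/j` and grouping the terms by `t = kj`, the right-hand side becomes
`∑_{t ≤ n} (1/t) ∑_{k ∣ t} c_k(n) = #{t ≤ n : t ∣ n} = d(n)`.
-/

open Finset ArithmeticFunction
open scoped ArithmeticFunction.Moebius ArithmeticFunction.zeta

theorem Nat.gcd_prime_pow_eq {n p : ℕ} (hp : p.Prime) (hn : n ≠ 0) (a : ℕ) :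
    n.gcd (p ^ a) = p ^ min (n.factorization p) a := by
  obtain ⟨j, -, hj⟩ := (Nat.dvd_prime_pow hp).1 (Nat.gcd_dvd_right n (p ^ a))
  have hfac := congrArg (fun m => m.factorization p) hj
  simp only [Nat.factorization_gcd hn (pow_ne_zero a hp.ne_zero), Finsupp.inf_apply,
    hp.factorization_pow, Finsupp.single_eq_same] at hfac
  rw [hj, ← hfac]

namespace ArithmeticFunction

theorem apply_prime_pow_succ_of_mul_zeta_eq {R : Type*} [Ring R] {f g : ArithmeticFunction R}
    (h : f * ζ = g) {p : ℕ} (hp : p.Prime) (a : ℕ) :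
    f (p ^ (a + 1)) = g (p ^ (a + 1)) - g (p ^ a) := by
  rw [← h, coe_mul_zeta_apply, coe_mul_zeta_apply, Nat.sum_divisors_prime_pow hp,
    Nat.sum_divisors_prime_pow hp, sum_range_succ, add_sub_cancel_left]

theorem sum_Ioc_mul_div_eq_sum_sum {R : Type*} [Field R] (f g : ArithmeticFunction R)
    (N : ℕ) :
    ∑ t ∈ Ioc 0 N, (f * g) t / t = ∑ k ∈ Ioc 0 N, f k / k * ∑ j ∈ Ioc 0 (N / k), g j / j := by
  let F : ArithmeticFunction R := ⟨fun k => f k / k, by simp⟩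
  let G : ArithmeticFunction R := ⟨fun k => g k / k, by simp⟩
  have hFG (t : ℕ) : (f * g) t / t = (F * G) t := by
    simp only [mul_apply, sum_div]
    refine sum_congr rfl fun x hx => ?_
    rw [← (Nat.mem_divisorsAntidiagonal.1 hx).1, Nat.cast_mul, mul_div_mul_comm]
    rfl
  simp only [hFG]
  exact sum_Ioc_mul_eq_sum_sum F G N

variable (R : Type*)

def divisorsId [Semiring R] (n : ℕ) : ArithmeticFunction R :=
  ⟨fun d => if d ∣ n then (d : R) else 0, by simp⟩

/-- The Ramanujan sum `c_k(n) = ∑_{d ∣ gcd(n, k)} d μ(k / d)`, as a function of `k`. -/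
def ramanujanSum [Ring R] (n : ℕ) : ArithmeticFunction R :=
  divisorsId R n * μ

/-- Von Sterneck's closed form of the Ramanujan sum. -/
def sterneck [DivisionRing R] (n : ℕ) : ArithmeticFunction R :=
  ⟨fun k => μ (k / n.gcd k) * ((k.totient : R) / (k / n.gcd k).totient), by simp⟩

variable {R}

theorem divisorsId_apply [Semiring R] (n d : ℕ) :
    divisorsId R n d = if d ∣ n then (d : R) else 0 := rfl

theorem sterneck_apply [DivisionRing R] (n k : ℕ) :
    sterneck R n k = μ (k / n.gcd k) * ((k.totient : R) / (k / n.gcd k).totient) := rfl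

theorem isMultiplicative_divisorsId [Semiring R] (n : ℕ) :
    (divisorsId R n).IsMultiplicative := by
  refine ⟨by simp [divisorsId_apply], fun {a b} hab => ?_⟩
  have hdvd : a * b ∣ n ↔ a ∣ n ∧ b ∣ n :=
    ⟨fun h => ⟨dvd_of_mul_right_dvd h, dvd_of_mul_left_dvd h⟩,
      fun h => hab.mul_dvd_of_dvd_of_dvd h.1 h.2⟩
  simp only [divisorsId_apply, hdvd]
  split_ifs <;> simp_all

theorem divisorsId_apply_prime_pow [Semiring R] {n p : ℕ} (hp : p.Prime) (hn : n ≠ 0) (j : ℕ) :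
    divisorsId R n (p ^ j) = if j ≤ n.factorization p then (p : R) ^ j else 0 := by
  simp only [divisorsId_apply, hp.pow_dvd_iff_le_factorization hn, Nat.cast_pow]

theorem sum_Ioc_divisorsId_div [DivisionRing R] [CharZero R] (n : ℕ) :
    ∑ t ∈ Ioc 0 n, divisorsId R n t / t = n.divisors.card := by
  have hterm : ∀ t ∈ Ioc 0 n, divisorsId R n t / t = if t ∣ n then 1 else 0 := by
    intro t ht
    have ht0 : (t : R) ≠ 0 := by exact_mod_cast (mem_Ioc.1 ht).1.ne'
    rw [divisorsId_apply]
    split_ifs <;> simp [ht0]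
  rw [sum_congr rfl hterm, sum_boole, Nat.divisors, ← Ico_add_one_add_one_eq_Ioc, zero_add]

theorem isMultiplicative_ramanujanSum [CommRing R] (n : ℕ) :
    (ramanujanSum R n).IsMultiplicative :=
  (isMultiplicative_divisorsId n).mul isMultiplicative_moebius.intCast

theorem ramanujanSum_mul_zeta [Ring R] (n : ℕ) : ramanujanSum R n * ζ = divisorsId R n := by
  rw [ramanujanSum, mul_assoc, coe_moebius_mul_coe_zeta, mul_one]

theorem isMultiplicative_sterneck [Field R] (n : ℕ) : (sterneck R n).IsMultiplicative := by
  refine ⟨by simp [sterneck_apply], fun {a b} hab => ?_⟩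
  have hga : n.gcd a ∣ a := Nat.gcd_dvd_right n a
  have hgb : n.gcd b ∣ b := Nat.gcd_dvd_right n b
  have hquot : a * b / n.gcd (a * b) = a / n.gcd a * (b / n.gcd b) := by
    rw [Nat.Coprime.gcd_mul n hab, Nat.div_mul_div_comm hga hgb]
  have hcop : (a / n.gcd a).Coprime (b / n.gcd b) :=
    (hab.coprime_dvd_left (Nat.div_dvd_of_dvd hga)).coprime_dvd_right (Nat.div_dvd_of_dvd hgb)
  simp only [sterneck_apply, hquot, isMultiplicative_moebius.map_mul_of_coprime hcop,
    Nat.totient_mul hab, Nat.totient_mul hcop]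
  push_cast
  rw [mul_div_mul_comm]
  ring

theorem ramanujanSum_eq_sterneck [Field R] [CharZero R] {n : ℕ} (hn : n ≠ 0) :
    ramanujanSum R n = sterneck R n := by
  refine (IsMultiplicative.eq_iff_eq_on_prime_powers _ (isMultiplicative_ramanujanSum n) _
    (isMultiplicative_sterneck n)).2 fun p i hp => ?_
  rcases i with _ | a
  · simp only [pow_zero, (isMultiplicative_ramanujanSum n).map_one,
      (isMultiplicative_sterneck n).map_one]
  rw [apply_prime_pow_succ_of_mul_zeta_eq (ramanujanSum_mul_zeta n) hp,
    divisorsId_apply_prime_pow hp hn, divisorsId_apply_prime_pow hp hn, sterneck_apply,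
    Nat.gcd_prime_pow_eq hp hn, Nat.pow_div (min_le_right _ _) hp.pos]
  have hp1 : (p : R) - 1 ≠ 0 := sub_ne_zero.2 (by exact_mod_cast hp.ne_one)
  rcases lt_trichotomy a (n.factorization p) with hlt | rfl | hgt
  · rw [min_eq_right hlt, Nat.sub_self, if_pos (Nat.succ_le_of_lt hlt), if_pos hlt.le, pow_zero,
      moebius_apply_one, Nat.totient_one, Nat.totient_prime_pow_succ hp]
    push_cast [hp.one_le]
    ring
  · rw [min_eq_left (Nat.le_succ _), Nat.add_sub_cancel_left, if_neg (by omega), if_pos le_rfl,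
      pow_one, moebius_apply_prime hp, Nat.totient_prime_pow_succ hp, Nat.totient_prime hp]
    push_cast [hp.one_le]
    field_simp
    ring
  · rw [min_eq_left (by omega), if_neg (by omega), if_neg (by omega),
      moebius_apply_prime_pow hp (by omega), if_neg (by omega)]
    simp

end ArithmeticFunction

theorem card_divisors_formula (n : ℕ) (hn : 0 < n) :
    (n.divisors.card : ℝ) =
      ∑ k ∈ Icc 1 n,
        (1 / (k : ℝ)) * (∑ i ∈ Icc 1 (n / k), (1 : ℝ) / i) *
          (μ (k / Nat.gcd n k) : ℝ) *
          ((Nat.totient k : ℝ) / (Nat.totient (k / Nat.gcd n k) : ℝ)) := by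
  have hIcc (m : ℕ) : Icc 1 m = Ioc 0 m := Icc_add_one_left_eq_Ioc 0 m
  have hharmonic (m : ℕ) :
      ∑ j ∈ Ioc 0 m, (ζ : ArithmeticFunction ℝ) j / j = ∑ i ∈ Icc 1 m, (1 : ℝ) / i := by
    rw [hIcc]
    exact sum_congr rfl fun j hj => by
      rw [natCoe_apply, zeta_apply, if_neg (mem_Ioc.1 hj).1.ne', Nat.cast_one]
  calc (n.divisors.card : ℝ)
      = ∑ t ∈ Ioc 0 n, (ramanujanSum ℝ n * ζ) t / t := by
        rw [ramanujanSum_mul_zeta, sum_Ioc_divisorsId_div]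
    _ = ∑ k ∈ Ioc 0 n,
          ramanujanSum ℝ n k / k * ∑ j ∈ Ioc 0 (n / k), (ζ : ArithmeticFunction ℝ) j / j :=
        sum_Ioc_mul_div_eq_sum_sum _ _ n
    _ = _ := by
      rw [ramanujanSum_eq_sterneck hn.ne', hIcc]
      refine sum_congr rfl fun k _ => ?_
      rw [hharmonic, sterneck_apply]
      ring
end

section
/- For every positive integer n, the sum of divisors function satisfies σ(n) = Σ_{k=1}^{n} c_k(n) · ⌊n/k⌋, where c_k(n) is the Ramanujan sum. -/
open Finset Real Complex

/-- The Ramanujan sum `c_m(n) = ∑_{1 ≤ k ≤ m, gcd(k,m)=1} exp(2πikn/m)`. -/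
noncomputable def ramanujanSum (m n : ℕ) : ℂ :=
  ∑ k ∈ (Icc 1 m).filter (fun k => Nat.gcd k m = 1),
    Complex.exp (2 * Real.pi * Complex.I * k * n / m)

/-!
Grouping the terms of `∑ k ≤ n, c_k(n) ⌊n/k⌋` by the multiples `m ≤ n` of `k` turns it into
`∑ m ≤ n, ∑ d ∣ m, c_d(n)`. Reducing each fraction `j/m` (`1 ≤ j ≤ m`) to lowest terms `k/d`
shows `∑ d ∣ m, c_d(n) = ∑ j ≤ m, e^{2πijn/m}`, which by orthogonality of the `m`-th roots of
unity is `m` if `m ∣ n` and `0` otherwise; summing over `m` leaves `σ(n)`.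
-/

theorem IsPrimitiveRoot.sum_Icc_pow_pow {R : Type*} [CommRing R] [IsDomain R] {ζ : R} {m : ℕ}
    (hζ : IsPrimitiveRoot ζ m) (n : ℕ) :
    ∑ j ∈ Icc 1 m, (ζ ^ n) ^ j = if m ∣ n then (m : R) else 0 := by
  split_ifs with hmn
  · simp [(hζ.pow_eq_one_iff_dvd n).mpr hmn]
  · have hgeom : (∑ j ∈ Icc 1 m, (ζ ^ n) ^ j) * (ζ ^ n - 1) = 0 := by
      rw [← Ico_add_one_right_eq_Icc, geom_sum_Ico_mul _ (by omega), pow_succ, pow_right_comm,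
        hζ.pow_eq_one, one_pow]
      ring
    refine (mul_eq_zero.mp hgeom).resolve_right (sub_ne_zero.mpr ?_)
    rwa [Ne, hζ.pow_eq_one_iff_dvd]

theorem Nat.gcd_mul_div_eq_div_of_coprime {k d m : ℕ} (hdm : d ∣ m) (hkd : k.gcd d = 1) :
    (k * (m / d)).gcd m = m / d := by
  calc (k * (m / d)).gcd m = (k * (m / d)).gcd (d * (m / d)) := by rw [Nat.mul_div_cancel' hdm]
    _ = m / d := by rw [Nat.gcd_mul_right, hkd, one_mul]

/-- The bijection `(d, k) ↦ k * (m / d)` sends a reduced fraction `k / d` with `d ∣ m` to the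
numerator of the same fraction over the denominator `m`. -/
theorem Nat.sum_divisors_sum_coprime {M : Type*} [AddCommMonoid M] (m : ℕ) (g : ℕ → M) :
    ∑ d ∈ m.divisors, ∑ k ∈ Icc 1 d with k.gcd d = 1, g (k * (m / d)) = ∑ j ∈ Icc 1 m, g j := by
  obtain rfl | hm := eq_or_ne m 0
  · simp
  rw [sum_sigma']
  refine sum_nbij' (fun x => x.2 * (m / x.1)) (fun j => ⟨m / j.gcd m, j / j.gcd m⟩)
    ?_ ?_ ?_ ?_ (fun _ _ => rfl)
  · rintro ⟨d, k⟩ hdk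
    simp only [mem_sigma, Nat.mem_divisors, mem_filter, mem_Icc] at hdk ⊢
    obtain ⟨⟨⟨e, rfl⟩, hde⟩, ⟨hk, hkd⟩, -⟩ := hdk
    have he : 0 < e := Nat.pos_of_ne_zero (right_ne_zero_of_mul hde)
    rw [Nat.mul_div_cancel_left e (Nat.pos_of_ne_zero (left_ne_zero_of_mul hde))]
    exact ⟨Nat.mul_pos hk he, Nat.mul_le_mul_right e hkd⟩
  · intro j hj
    rw [mem_Icc] at hj
    have hg : 0 < j.gcd m := Nat.gcd_pos_of_pos_left m hj.1
    simp only [mem_sigma, Nat.mem_divisors, mem_filter, mem_Icc]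
    exact ⟨⟨Nat.div_dvd_of_dvd (Nat.gcd_dvd_right j m), hm⟩,
      ⟨Nat.div_pos (Nat.gcd_le_left m hj.1) hg, Nat.div_le_div_right hj.2⟩,
      Nat.coprime_div_gcd_div_gcd hg⟩
  · rintro ⟨d, k⟩ hdk
    simp only [mem_sigma, Nat.mem_divisors, mem_filter, mem_Icc] at hdk
    obtain ⟨⟨hdm, -⟩, -, hkd⟩ := hdk
    have hmd : 0 < m / d := Nat.div_pos (Nat.le_of_dvd (Nat.pos_of_ne_zero hm) hdm)
      (Nat.pos_of_dvd_of_pos hdm (Nat.pos_of_ne_zero hm))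
    dsimp only
    rw [Nat.gcd_mul_div_eq_div_of_coprime hdm hkd, Nat.div_div_self hdm hm,
      Nat.mul_div_cancel _ hmd]
  · intro j _
    dsimp only
    rw [Nat.div_div_self (Nat.gcd_dvd_right j m) hm, Nat.div_mul_cancel (Nat.gcd_dvd_left j m)]

theorem sum_divisors_ramanujanSum (m n : ℕ) :
    ∑ d ∈ m.divisors, ramanujanSum d n = if m ∣ n then (m : ℂ) else 0 := by
  obtain rfl | hm := eq_or_ne m 0
  · simp
  calc ∑ d ∈ m.divisors, ramanujanSum d n
      = ∑ d ∈ m.divisors, ∑ k ∈ Icc 1 d with k.gcd d = 1,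
          (exp (2 * π * I / m) ^ n) ^ (k * (m / d)) := by
        refine sum_congr rfl fun d hd => sum_congr rfl fun k _ => ?_
        obtain ⟨e, rfl⟩ := Nat.dvd_of_mem_divisors hd
        have hd0 : (d : ℂ) ≠ 0 := by exact_mod_cast (left_ne_zero_of_mul hm)
        have he0 : (e : ℂ) ≠ 0 := by exact_mod_cast (right_ne_zero_of_mul hm)
        rw [Nat.mul_div_cancel_left e (Nat.pos_of_ne_zero (left_ne_zero_of_mul hm)),
          ← pow_mul, ← Complex.exp_nat_mul]
        congr 1
        push_cast
        field_simp
    _ = ∑ j ∈ Icc 1 m, (exp (2 * π * I / m) ^ n) ^ j := Nat.sum_divisors_sum_coprime m _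
    _ = if m ∣ n then (m : ℂ) else 0 := (isPrimitiveRoot_exp m hm).sum_Icc_pow_pow n

noncomputable def ramanujanSumArithmeticFunction (n : ℕ) : ArithmeticFunction ℂ :=
  ⟨fun m => ramanujanSum m n, by simp [ramanujanSum]⟩

theorem sigma_eq_sum_ramanujan_general (n : ℕ) :
    ((∑ d ∈ n.divisors, d : ℕ) : ℂ) =
      ∑ k ∈ Icc 1 n, ramanujanSum k n * ((n / k : ℕ) : ℂ) := by
  calc ((∑ d ∈ n.divisors, d : ℕ) : ℂ) = ∑ m ∈ Icc 1 n, if m ∣ n then (m : ℂ) else 0 := by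
        rw [Nat.divisors, Ico_add_one_right_eq_Icc, Nat.cast_sum, sum_filter]
    _ = ∑ m ∈ Icc 1 n, (ramanujanSumArithmeticFunction n * ArithmeticFunction.zeta) m := by
        refine sum_congr rfl fun m _ => ?_
        rw [ArithmeticFunction.coe_mul_zeta_apply, ← sum_divisors_ramanujanSum]
        rfl
    -- `Ioc 0 n` and `Icc 1 n` agree definitionally on `ℕ`
    _ = _ := ArithmeticFunction.sum_Ioc_mul_zeta_eq_sum _ n

theorem sigma_eq_sum_ramanujan (n : ℕ) (hn : 0 < n) :
    ((∑ d ∈ n.divisors, d : ℕ) : ℂ) =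
      ∑ k ∈ Icc 1 n, ramanujanSum k n * ((n / k : ℕ) : ℂ) :=
  sigma_eq_sum_ramanujan_general n
end

section
/- For every positive integer n, Σ_{k=1}^{n} μ(k / gcd(n,k)) · (φ(k) / φ(k / gcd(n,k))) · Σ_{l=1}^{⌊n/k⌋} log((k·l)²/n)/(k·l) = 0. -/
/-!
The weight `μ(k / (n, k)) φ(k) / φ(k / (n, k))` is von Sterneck's closed form of the Ramanujan
sum `c_k(n)`. It is multiplicative in `k`, and a computation on prime powers gives
`∑_{d ∣ m} c_d(n) = m` if `m ∣ n` and `0` otherwise. Grouping the double sum by `m = k l`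
therefore collapses it to `∑_{m ∣ n} log (m² / n)`, which vanishes because `m ↦ n / m` permutes
the divisors of `n` and changes the sign of `log (m² / n)`.
-/

open Finset ArithmeticFunction
open scoped ArithmeticFunction.Moebius ArithmeticFunction.zeta

namespace Nat

theorem Coprime.mul_div_gcd_mul (n : ℕ) {a b : ℕ} (h : a.Coprime b) :
    a * b / n.gcd (a * b) = a / n.gcd a * (b / n.gcd b) := by
  rw [h.gcd_mul n, Nat.div_mul_div_comm (Nat.gcd_dvd_right n a) (Nat.gcd_dvd_right n b)]

theorem Coprime.div_gcd_div_gcd (n : ℕ) {a b : ℕ} (h : a.Coprime b) :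
    (a / n.gcd a).Coprime (b / n.gcd b) :=
  (h.coprime_div_left (Nat.gcd_dvd_right n a)).coprime_div_right (Nat.gcd_dvd_right n b)

theorem gcd_prime_pow_of_factorization_le {n p j : ℕ} (hp : p.Prime) (hn : n ≠ 0)
    (hj : n.factorization p ≤ j) : n.gcd (p ^ j) = p ^ n.factorization p := by
  conv_lhs => rw [← Nat.ordProj_mul_ordCompl_eq_self n p, ← pow_mul_pow_sub p hj]
  rw [Nat.gcd_mul_left, ((Nat.coprime_ordCompl hp hn).pow_left _).symm.gcd_eq_one, mul_one]

theorem Icc_filter_dvd_eq_map {N k : ℕ} (hk : 0 < k) :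
    {m ∈ Icc 1 N | k ∣ m} = (Icc 1 (N / k)).map ⟨(k * ·), mul_right_injective₀ hk.ne'⟩ := by
  ext m
  simp only [mem_filter, mem_Icc, mem_map, Function.Embedding.coeFn_mk, Nat.le_div_iff_mul_le hk]
  constructor
  · rintro ⟨⟨h1, hN⟩, l, rfl⟩
    exact ⟨l, ⟨Nat.pos_of_mul_pos_left h1, by rwa [mul_comm]⟩, rfl⟩
  · rintro ⟨l, ⟨h1, hN⟩, rfl⟩
    exact ⟨⟨Nat.mul_pos hk h1, by rwa [mul_comm]⟩, dvd_mul_right k l⟩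

theorem Icc_filter_dvd_eq_divisors {N m : ℕ} (hm : m ∈ Icc 1 N) :
    {k ∈ Icc 1 N | k ∣ m} = m.divisors := by
  rw [mem_Icc] at hm
  ext k
  simp only [mem_filter, mem_Icc, Nat.mem_divisors]
  constructor
  · rintro ⟨_, h⟩
    exact ⟨h, by omega⟩
  · rintro ⟨h, _⟩
    exact ⟨⟨Nat.pos_of_dvd_of_pos h (by omega), (Nat.le_of_dvd (by omega) h).trans hm.2⟩, h⟩

theorem two_mul_sum_divisors_log (n : ℕ) :
    2 * ∑ d ∈ n.divisors, Real.log d = #n.divisors * Real.log n := by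
  have hswap : ∑ d ∈ n.divisors, Real.log d = ∑ d ∈ n.divisors, (Real.log n - Real.log d) := by
    rw [← Nat.sum_div_divisors]
    refine sum_congr rfl fun d hd => ?_
    have hd0 : (d : ℝ) ≠ 0 := Nat.cast_ne_zero.mpr (Nat.pos_of_mem_divisors hd).ne'
    have hn0 : (n : ℝ) ≠ 0 := Nat.cast_ne_zero.mpr (Nat.ne_zero_of_mem_divisors hd)
    rw [Nat.cast_div (Nat.dvd_of_mem_divisors hd) hd0, Real.log_div hn0 hd0]
  rw [sum_sub_distrib, sum_const, nsmul_eq_mul] at hswap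
  linarith

theorem sum_divisors_log_sq_div_self (n : ℕ) :
    ∑ d ∈ n.divisors, Real.log ((d : ℝ) ^ 2 / n) = 0 := by
  have hlog : ∀ d ∈ n.divisors, Real.log ((d : ℝ) ^ 2 / n) = 2 * Real.log d - Real.log n := by
    intro d hd
    have hd0 : (d : ℝ) ≠ 0 := Nat.cast_ne_zero.mpr (Nat.pos_of_mem_divisors hd).ne'
    have hn0 : (n : ℝ) ≠ 0 := Nat.cast_ne_zero.mpr (Nat.ne_zero_of_mem_divisors hd)
    rw [Real.log_div (pow_ne_zero 2 hd0) hn0, Real.log_pow, Nat.cast_ofNat]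
  rw [sum_congr rfl hlog, sum_sub_distrib, ← mul_sum, two_mul_sum_divisors_log, sum_const,
    nsmul_eq_mul, sub_self]

end Nat

theorem Finset.sum_Icc_mul_sum_multiples {R : Type*} [CommSemiring R] (N : ℕ) (f g : ℕ → R) :
    ∑ k ∈ Icc 1 N, f k * ∑ l ∈ Icc 1 (N / k), g (k * l) =
      ∑ m ∈ Icc 1 N, (∑ d ∈ m.divisors, f d) * g m := by
  have hmultiples : ∀ k ∈ Icc 1 N,
      ∑ l ∈ Icc 1 (N / k), g (k * l) = ∑ m ∈ Icc 1 N with k ∣ m, g m := fun k hk => by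
    rw [Nat.Icc_filter_dvd_eq_map (mem_Icc.mp hk).1, sum_map]
    rfl
  simp_rw +contextual [hmultiples, mul_sum, sum_filter]
  rw [sum_comm]
  refine sum_congr rfl fun m hm => ?_
  rw [← Nat.Icc_filter_dvd_eq_divisors hm, sum_filter, sum_mul]
  exact sum_congr rfl fun k _ => by split_ifs <;> simp

namespace ArithmeticFunction

variable {R : Type*}

def totient : ArithmeticFunction ℕ := ⟨Nat.totient, Nat.totient_zero⟩

@[simp]
theorem totient_apply (k : ℕ) : totient k = Nat.totient k := rfl

theorem isMultiplicative_totient : totient.IsMultiplicative :=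
  ⟨Nat.totient_one, Nat.totient_mul⟩

def compDivGcd [Zero R] (f : ArithmeticFunction R) (n : ℕ) : ArithmeticFunction R :=
  ⟨fun k => f (k / n.gcd k), by simp⟩

@[simp]
theorem compDivGcd_apply [Zero R] (f : ArithmeticFunction R) (n k : ℕ) :
    f.compDivGcd n k = f (k / n.gcd k) := rfl

theorem IsMultiplicative.compDivGcd [MonoidWithZero R] {f : ArithmeticFunction R}
    (hf : f.IsMultiplicative) (n : ℕ) : (f.compDivGcd n).IsMultiplicative :=
  ⟨by simp [hf.map_one], fun h => by
    simp only [compDivGcd_apply, h.mul_div_gcd_mul, hf.map_mul_of_coprime (h.div_gcd_div_gcd n)]⟩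

def idOnDivisors [Semiring R] (n : ℕ) : ArithmeticFunction R :=
  ⟨fun m => if m ∣ n then (m : R) else 0, by simp⟩

theorem idOnDivisors_apply [Semiring R] (n m : ℕ) :
    idOnDivisors n m = if m ∣ n then (m : R) else 0 := rfl

theorem isMultiplicative_idOnDivisors [Semiring R] (n : ℕ) :
    (idOnDivisors n : ArithmeticFunction R).IsMultiplicative := by
  refine ⟨by simp [idOnDivisors_apply], fun {a b} h => ?_⟩
  have hab : a * b ∣ n ↔ a ∣ n ∧ b ∣ n :=
    ⟨fun hn => ⟨dvd_of_mul_right_dvd hn, dvd_of_mul_left_dvd hn⟩,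
      fun hn => h.mul_dvd_of_dvd_of_dvd hn.1 hn.2⟩
  simp only [idOnDivisors_apply, hab, Nat.cast_mul]
  by_cases ha : a ∣ n <;> by_cases hb : b ∣ n <;> simp [ha, hb]

/-- The Ramanujan sum `c_k(n)`, in von Sterneck's closed form. -/
noncomputable def vonSterneck (n : ℕ) : ArithmeticFunction ℝ :=
  pmul ((μ : ArithmeticFunction ℝ).compDivGcd n)
    (pdiv (totient : ArithmeticFunction ℝ) ((totient : ArithmeticFunction ℝ).compDivGcd n))

theorem vonSterneck_apply (n k : ℕ) :
    vonSterneck n k = (μ (k / n.gcd k) : ℝ) * ((k.totient : ℝ) / ((k / n.gcd k).totient : ℝ)) := by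
  simp [vonSterneck, pmul_apply, pdiv_apply, intCoe_apply, natCoe_apply]

theorem isMultiplicative_vonSterneck (n : ℕ) : (vonSterneck n).IsMultiplicative :=
  (isMultiplicative_moebius.intCast.compDivGcd n).pmul
    (isMultiplicative_totient.natCast.pdiv (isMultiplicative_totient.natCast.compDivGcd n))

theorem vonSterneck_of_dvd {n k : ℕ} (h : k ∣ n) : vonSterneck n k = k.totient := by
  rcases eq_or_ne k 0 with rfl | hk
  · simp
  · simp [vonSterneck_apply, Nat.gcd_eq_right h, Nat.div_self (Nat.pos_of_ne_zero hk)]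

theorem vonSterneck_prime_pow {n p j : ℕ} (hp : p.Prime) (hn : n ≠ 0)
    (hj : n.factorization p ≤ j) :
    vonSterneck n (p ^ j) = (μ (p ^ (j - n.factorization p)) : ℝ) *
      ((p ^ j).totient / (p ^ (j - n.factorization p)).totient : ℝ) := by
  rw [vonSterneck_apply, Nat.gcd_prime_pow_of_factorization_le hp hn hj, Nat.pow_div hj hp.pos]

theorem vonSterneck_prime_pow_factorization_succ {n p : ℕ} (hp : p.Prime) (hn : n ≠ 0) :
    vonSterneck n (p ^ (n.factorization p + 1)) = -(p : ℝ) ^ n.factorization p := by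
  have hp1 : ((p - 1 : ℕ) : ℝ) ≠ 0 := Nat.cast_ne_zero.mpr (Nat.sub_ne_zero_of_lt hp.one_lt)
  rw [vonSterneck_prime_pow hp hn (Nat.le_add_right _ 1), Nat.add_sub_cancel_left, pow_one,
    moebius_apply_prime hp, Nat.totient_prime_pow_succ hp, Nat.totient_prime hp]
  push_cast
  field_simp

theorem vonSterneck_prime_pow_of_factorization_add_two_le {n p j : ℕ} (hp : p.Prime)
    (hn : n ≠ 0) (hj : n.factorization p + 2 ≤ j) : vonSterneck n (p ^ j) = 0 := by
  rw [vonSterneck_prime_pow hp hn (by omega), moebius_apply_prime_pow hp (by omega),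
    if_neg (by omega)]
  simp

theorem sum_divisors_vonSterneck_of_dvd {n m : ℕ} (h : m ∣ n) :
    ∑ d ∈ m.divisors, vonSterneck n d = m := by
  rw [sum_congr rfl fun d hd => vonSterneck_of_dvd ((Nat.dvd_of_mem_divisors hd).trans h)]
  exact_mod_cast Nat.sum_totient m

theorem sum_divisors_prime_pow_vonSterneck_of_not_dvd {n p i : ℕ} (hp : p.Prime)
    (hi : ¬p ^ i ∣ n) : ∑ d ∈ (p ^ i).divisors, vonSterneck n d = 0 := by
  have hn : n ≠ 0 := by
    rintro rfl
    exact hi (dvd_zero _)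
  set b := n.factorization p
  have hbi : b + 2 ≤ i + 1 := by
    by_contra! h
    exact hi ((pow_dvd_pow p (by omega)).trans (Nat.ordProj_dvd n p))
  have hlow : ∑ j ∈ range (b + 1), vonSterneck n (p ^ j) = (p : ℝ) ^ b := by
    rw [← Nat.sum_divisors_prime_pow hp, sum_divisors_vonSterneck_of_dvd (Nat.ordProj_dvd n p)]
    push_cast
    rfl
  rw [Nat.sum_divisors_prime_pow hp, ← sum_range_add_sum_Ico _ hbi, sum_range_succ, hlow,
    vonSterneck_prime_pow_factorization_succ hp hn, add_neg_cancel, zero_add]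
  exact sum_eq_zero fun j hj =>
    vonSterneck_prime_pow_of_factorization_add_two_le hp hn (mem_Ico.mp hj).1

theorem vonSterneck_mul_zeta (n : ℕ) :
    vonSterneck n * (ζ : ArithmeticFunction ℝ) = idOnDivisors n := by
  refine ((isMultiplicative_vonSterneck n).mul isMultiplicative_zeta.natCast)
    |>.eq_iff_eq_on_prime_powers _ _ (isMultiplicative_idOnDivisors n) |>.mpr fun p i hp => ?_
  rw [coe_mul_zeta_apply, idOnDivisors_apply]
  split_ifs with h
  · exact sum_divisors_vonSterneck_of_dvd h
  · exact sum_divisors_prime_pow_vonSterneck_of_not_dvd hp h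

theorem sum_divisors_vonSterneck (n m : ℕ) :
    ∑ d ∈ m.divisors, vonSterneck n d = if m ∣ n then (m : ℝ) else 0 := by
  rw [← coe_mul_zeta_apply, vonSterneck_mul_zeta, idOnDivisors_apply]

end ArithmeticFunction

theorem log_sum_vanishes_general (n : ℕ) :
    ∑ k ∈ Icc 1 n,
        (μ (k / Nat.gcd n k) : ℝ) *
          ((Nat.totient k : ℝ) / (Nat.totient (k / Nat.gcd n k) : ℝ)) *
          ∑ l ∈ Icc 1 (n / k),
            Real.log (((k : ℝ) * l) ^ 2 / n) / ((k : ℝ) * l) = 0 := by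
  set F : ℕ → ℝ := fun m => Real.log ((m : ℝ) ^ 2 / n) / m
  have hdivisors : {m ∈ Icc 1 n | m ∣ n} = n.divisors := by
    rw [← Finset.Ico_add_one_right_eq_Icc]
    rfl
  calc _ = ∑ k ∈ Icc 1 n, vonSterneck n k * ∑ l ∈ Icc 1 (n / k), F (k * l) := by
          simp only [vonSterneck_apply, F, Nat.cast_mul]
    _ = ∑ m ∈ Icc 1 n, (if m ∣ n then (m : ℝ) else 0) * F m := by
          rw [sum_Icc_mul_sum_multiples]
          simp only [sum_divisors_vonSterneck]
    _ = ∑ m ∈ n.divisors, Real.log ((m : ℝ) ^ 2 / n) := by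
          simp only [ite_mul, zero_mul]
          rw [← sum_filter, hdivisors]
          exact sum_congr rfl fun m hm =>
            mul_div_cancel₀ _ (Nat.cast_ne_zero.mpr (Nat.pos_of_mem_divisors hm).ne')
    _ = 0 := Nat.sum_divisors_log_sq_div_self n

theorem log_sum_vanishes (n : ℕ) (hn : 0 < n) :
    ∑ k ∈ Icc 1 n,
        (μ (k / Nat.gcd n k) : ℝ) *
          ((Nat.totient k : ℝ) / (Nat.totient (k / Nat.gcd n k) : ℝ)) *
          ∑ l ∈ Icc 1 (n / k),
            Real.log (((k : ℝ) * l) ^ 2 / n) / ((k : ℝ) * l) = 0 :=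
  log_sum_vanishes_general n
end
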